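/- Let g(x) = (x + c) exp((i√t·x + T/(4√t))²) for real parameters t > 0, T, and c ∈ ℂ. Then the Fourier transform of g satisfies ĝ(ξ) evaluated at integers k gives the Poisson-summation identity Σ_{k∈ℤ} (k + f + c) exp((i√t(k+f) + T/(4√t))²) = -Σ_{k∈ℤ} i k (π/t)^{3/2} exp(-π²k²/t + 2πikf + πkT/(2t)) when c = -iT/(4t), for every f ∈ ℝ, t > 0, T ∈ ℝ. -/

import Mathlib

/-!
With `w = f - iT/(4t)` the summand is `(k + w) exp(-t (k + w)²)`, so the identity is the
`w`-derivative of Poisson summation for the Gaussian. At `τ = it/π` one has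
`exp(πiτ(k + w)²) = exp(πiτw²) θ_k(wτ, τ)` for the Jacobi theta terms `θ_k`, so the left side is
`exp(πiτw²) ((2πi)⁻¹ θ'(wτ, τ) + w θ(wτ, τ))`. In the functional equations of `θ` and `θ'` under
`τ ↦ -1/τ` the two `θ(w, -1/τ)` terms of this combination cancel, leaving a multiple of
`θ'(w, -1/τ) = 2πi Σ k exp(2πikw - πik²/τ)`, which is the right side.
-/

open Real

section
open Complex

lemma sq_I_mul_add_div_eq (s x T : ℂ) (hs : s ≠ 0) :
    (I * s * x + T / (4 * s)) ^ 2 = -s ^ 2 * (x - I * T / (4 * s ^ 2)) ^ 2 := by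
  field_simp
  ring_nf
  rw [I_sq]
  ring

lemma cexp_mul_add_sq_eq_mul_jacobiTheta₂_term (k : ℤ) (w τ : ℂ) :
    cexp (π * I * τ * (k + w) ^ 2) = cexp (π * I * τ * w ^ 2) * jacobiTheta₂_term k (w * τ) τ := by
  rw [jacobiTheta₂_term, ← Complex.exp_add]
  ring_nf

lemma hasSum_add_mul_jacobiTheta₂_term (z w : ℂ) {τ : ℂ} (hτ : 0 < τ.im) :
    HasSum (fun k : ℤ ↦ (k + w) * jacobiTheta₂_term k z τ)
      ((2 * π * I)⁻¹ * jacobiTheta₂' z τ + w * jacobiTheta₂ z τ) := by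
  refine (((hasSum_jacobiTheta₂'_term z hτ).mul_left (2 * π * I)⁻¹).add
    ((hasSum_jacobiTheta₂_term z hτ).mul_left w)).congr_fun fun k ↦ ?_
  simp only [jacobiTheta₂'_term]
  field_simp

lemma tsum_mul_jacobiTheta₂_term (z τ : ℂ) :
    ∑' k : ℤ, k * jacobiTheta₂_term k z τ = (2 * π * I)⁻¹ * jacobiTheta₂' z τ := by
  rw [jacobiTheta₂', ← tsum_mul_left]
  congr 1 with k
  simp only [jacobiTheta₂'_term]
  field_simp

lemma jacobiTheta₂'_add_mul_jacobiTheta₂_functional_equation (w : ℂ) {τ : ℂ} (hτ : τ ≠ 0) :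
    (2 * π * I)⁻¹ * jacobiTheta₂' (w * τ) τ + w * jacobiTheta₂ (w * τ) τ =
      1 / (-I * τ) ^ (1 / 2 : ℂ) * cexp (-π * I * τ * w ^ 2) / τ *
        ((2 * π * I)⁻¹ * jacobiTheta₂' w (-1 / τ)) := by
  have hz : w * τ / τ = w := mul_div_cancel_right₀ w hτ
  have hexp : -π * I * (w * τ) ^ 2 / τ = -π * I * τ * w ^ 2 := by field_simp
  rw [jacobiTheta₂_functional_equation (w * τ), jacobiTheta₂'_functional_equation, hz, hexp]
  field_simp
  ring

theorem tsum_add_mul_cexp_mul_add_sq (w : ℂ) {τ : ℂ} (hτ : 0 < τ.im) :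
    ∑' k : ℤ, (k + w) * cexp (π * I * τ * (k + w) ^ 2) =
      1 / (-I * τ) ^ (1 / 2 : ℂ) / τ * ∑' k : ℤ, k * jacobiTheta₂_term k w (-1 / τ) := by
  have hτ0 : τ ≠ 0 := fun h ↦ by simp [h] at hτ
  have hexp : cexp (π * I * τ * w ^ 2) * cexp (-π * I * τ * w ^ 2) = 1 := by
    rw [← Complex.exp_add]; ring_nf; exact Complex.exp_zero
  simp_rw [cexp_mul_add_sq_eq_mul_jacobiTheta₂_term, mul_left_comm _ (cexp _), tsum_mul_left,
    (hasSum_add_mul_jacobiTheta₂_term _ w hτ).tsum_eq,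
    jacobiTheta₂'_add_mul_jacobiTheta₂_functional_equation w hτ0, tsum_mul_jacobiTheta₂_term]
  linear_combination
    (1 / (-I * τ) ^ (1 / 2 : ℂ) / τ * ((2 * π * I)⁻¹ * jacobiTheta₂' w (-1 / τ))) * hexp

theorem tsum_add_mul_cexp_neg_mul_add_sq (w : ℂ) {t : ℝ} (ht : 0 < t) :
    ∑' k : ℤ, (k + w) * cexp (-t * (k + w) ^ 2) =
      -I * ((π / t) ^ ((3 : ℝ) / 2) : ℝ) *
        ∑' k : ℤ, k * cexp (-π ^ 2 * k ^ 2 / t + 2 * π * I * k * w) := by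
  have ht0 : (t : ℂ) ≠ 0 := ofReal_ne_zero.mpr ht.ne'
  set τ : ℂ := I * (t / π)
  have hτ : 0 < τ.im := by
    simpa [τ, ← ofReal_div] using div_pos ht pi_pos
  have hπIτ : π * I * τ = -t := by
    simp only [τ]; field_simp; exact I_sq
  have hsqrt : (-I * τ) ^ (1 / 2 : ℂ) = (((t / π) ^ ((1 : ℝ) / 2) : ℝ) : ℂ) := by
    have : -I * τ = ((t / π : ℝ) : ℂ) := by
      simp only [τ]; push_cast; rw [← mul_assoc, neg_mul, I_mul_I]; ring
    rw [this, ofReal_cpow (div_pos ht pi_pos).le]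
    norm_num
  have hconst : 1 / (-I * τ) ^ (1 / 2 : ℂ) / τ = -I * ((π / t) ^ ((3 : ℝ) / 2) : ℝ) := by
    have h32 : (π / t) ^ ((3 : ℝ) / 2) = π / t / (t / π) ^ ((1 : ℝ) / 2) := by
      rw [show (3 : ℝ) / 2 = 1 + 1 / 2 by norm_num, rpow_add (div_pos pi_pos ht), rpow_one,
        ← inv_div π t, inv_rpow (div_pos pi_pos ht).le, div_inv_eq_mul]
    rw [hsqrt, h32]
    have : ((t / π) ^ ((1 : ℝ) / 2) : ℝ) ≠ 0 := (rpow_pos_of_pos (div_pos ht pi_pos) _).ne'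
    simp only [τ]
    push_cast
    field_simp
    rw [I_sq]; ring
  have hterm (k : ℤ) :
      jacobiTheta₂_term k w (-1 / τ) = cexp (-π ^ 2 * k ^ 2 / t + 2 * π * I * k * w) := by
    rw [jacobiTheta₂_term]
    congr 1
    simp only [τ]
    field_simp
    ring_nf
  simp_rw [← hπIτ, tsum_add_mul_cexp_mul_add_sq w hτ, hterm, hconst]

end

/-- Poisson summation identity for `g(x) = (x - iT/(4t)) exp((i√t x + T/(4√t))²)`:
for every `f ∈ ℝ`, `t > 0`, `T ∈ ℝ`,
`Σ_{k∈ℤ} (k + f - iT/(4t)) exp((i√t(k+f) + T/(4√t))²)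
  = -Σ_{k∈ℤ} i k (π/t)^{3/2} exp(-π²k²/t + 2πikf + πkT/(2t))`. -/
theorem poisson_summation_gaussian (f t T : ℝ) (ht : 0 < t) :
    (∑' k : ℤ, ((k : ℂ) + (f : ℂ) - Complex.I * (T : ℂ) / (4 * (t : ℂ))) *
        Complex.exp ((Complex.I * (Real.sqrt t : ℂ) * ((k : ℂ) + (f : ℂ)) +
          (T : ℂ) / (4 * (Real.sqrt t : ℂ))) ^ 2)) =
      -∑' k : ℤ, Complex.I * (k : ℂ) * ((((π / t) ^ ((3 : ℝ) / 2) : ℝ)) : ℂ) *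
        Complex.exp (-(π : ℂ) ^ 2 * (k : ℂ) ^ 2 / (t : ℂ) +
          2 * (π : ℂ) * Complex.I * (k : ℂ) * (f : ℂ) +
          (π : ℂ) * (k : ℂ) * (T : ℂ) / (2 * (t : ℂ))) := by
  set w : ℂ := f - Complex.I * T / (4 * t)
  have hs : ((Real.sqrt t : ℝ) : ℂ) ^ 2 = t := by rw [← Complex.ofReal_pow, sq_sqrt ht.le]
  have hs0 : ((Real.sqrt t : ℝ) : ℂ) ≠ 0 := Complex.ofReal_ne_zero.mpr (sqrt_pos.mpr ht).ne'
  have hleft (k : ℤ) : ((k : ℂ) + (f : ℂ) - Complex.I * (T : ℂ) / (4 * (t : ℂ))) *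
      Complex.exp ((Complex.I * (Real.sqrt t : ℂ) * ((k : ℂ) + (f : ℂ)) +
        (T : ℂ) / (4 * (Real.sqrt t : ℂ))) ^ 2) = (k + w) * Complex.exp (-t * (k + w) ^ 2) := by
    rw [sq_I_mul_add_div_eq _ _ _ hs0, hs, add_sub_assoc]
  have hright (k : ℤ) : Complex.I * (k : ℂ) * ((((π / t) ^ ((3 : ℝ) / 2) : ℝ)) : ℂ) *
      Complex.exp (-(π : ℂ) ^ 2 * (k : ℂ) ^ 2 / (t : ℂ) +
        2 * (π : ℂ) * Complex.I * (k : ℂ) * (f : ℂ) + (π : ℂ) * (k : ℂ) * (T : ℂ) / (2 * (t : ℂ))) =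
      Complex.I * ((π / t) ^ ((3 : ℝ) / 2) : ℝ) *
        (k * Complex.exp (-π ^ 2 * k ^ 2 / t + 2 * π * Complex.I * k * w)) := by
    have ht0 : (t : ℂ) ≠ 0 := Complex.ofReal_ne_zero.mpr ht.ne'
    have hexp : 2 * π * Complex.I * k * w =
        2 * (π : ℂ) * Complex.I * (k : ℂ) * (f : ℂ) + (π : ℂ) * (k : ℂ) * (T : ℂ) / (2 * (t : ℂ)) := by
      simp only [w]
      field_simp
      ring_nf
      rw [Complex.I_sq]
      ring
    rw [add_assoc, ← hexp]
    ring
  rw [tsum_congr hleft, tsum_congr hright, tsum_mul_left, tsum_add_mul_cexp_neg_mul_add_sq w ht]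
  ring
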